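/- arXiv:2208.08702 — 5 statements merged into one kernel-verified Lean document; each statement's English description precedes it below -/
import Mathlib

section
/- Let p > 1 and 0 ≤ α < 1, and let f : [1,∞) → [0,∞) be continuous. Assume there exist constants C₀ > 0, C₁ > 0, C₂ ≥ 0 and C₃ ≥ 0 such that for all real numbers 1 ≤ x₁ < x₂ one has f(x₂) + C₁ ∫_{x₁}^{x₂} x^{−α} f(x) dx ≤ C₀ f(x₁) + C₂ ∫_{x₁}^{x₂} x^{−p} dx + C₃ x₁^{−p}. Then there exists a constant C, depending only on f(1), C₀, C₁, C₂, C₃, p and α, such that f(x) ≤ C x^{−p+α} for all x ≥ 1. -/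
/-!
Over a window `[x, x + L x^α]` the integral term bounds the minimum of `f` by
`O((f(x) + x^(α-p)) / L)`, and the inequality from the minimum point to the right end of the
window then gives `f(x + L x^α) ≤ θ f(x) + K x^(α-p)` with `θ = O(1/L)`. Once
`x ≥ L^(1/(1-α))` the window at most doubles `x`, so for `L` large the bound `f ≤ M x^(α-p)`
propagates from each `y` to `y + L y^α`.
These steps have length at least `L`, so by continuity and the intermediate value theorem every
point beyond a compact initial segment, where `f` is bounded, is reached.
-/

open MeasureTheory Set

theorem integral_rpow_le_of_nonpos {a b r : ℝ} (ha : 0 < a) (hab : a ≤ b) (hr : r ≤ 0) :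
    ∫ t in a..b, t ^ r ≤ (b - a) * a ^ r := by
  have hcont : ContinuousOn (fun t : ℝ => t ^ r) (uIcc a b) := fun t ht =>
    (Real.continuousAt_rpow_const t r
      (Or.inl (ha.trans_le (uIcc_of_le hab ▸ ht).1).ne')).continuousWithinAt
  calc ∫ t in a..b, t ^ r ≤ ∫ _ in a..b, a ^ r :=
        intervalIntegral.integral_mono_on hab hcont.intervalIntegrable intervalIntegrable_const
          fun t ht => Real.rpow_le_rpow_of_nonpos ha ht.1 hr
    _ = (b - a) * a ^ r := by simp

theorem exists_mul_le_integral_rpow_neg_mul {f : ℝ → ℝ} {a b α : ℝ} (ha : 0 < a) (hab : a ≤ b)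
    (hα : 0 ≤ α) (hfc : ContinuousOn f (Icc a b)) (hf : ∀ t ∈ Icc a b, 0 ≤ f t) :
    ∃ ξ ∈ Icc a b, (b - a) * (b ^ (-α) * f ξ) ≤ ∫ t in a..b, t ^ (-α) * f t := by
  obtain ⟨ξ, hξ, hmin⟩ := isCompact_Icc.exists_isMinOn (nonempty_Icc.2 hab) hfc
  have hpow : ContinuousOn (fun t : ℝ => t ^ (-α)) (Icc a b) := fun t ht =>
    (Real.continuousAt_rpow_const t _ (Or.inl (ha.trans_le ht.1).ne')).continuousWithinAt
  refine ⟨ξ, hξ, ?_⟩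
  calc (b - a) * (b ^ (-α) * f ξ) = ∫ _ in a..b, b ^ (-α) * f ξ := by simp [mul_left_comm]
    _ ≤ ∫ t in a..b, t ^ (-α) * f t := by
      refine intervalIntegral.integral_mono_on hab intervalIntegrable_const
        ((hpow.mul hfc).mono (uIcc_of_le hab ▸ Subset.rfl)).intervalIntegrable fun t ht => ?_
      exact mul_le_mul (Real.rpow_le_rpow_of_nonpos (ha.trans_le ht.1) ht.2 (by linarith))
        (hmin ht) (hf ξ hξ) (Real.rpow_nonneg (ha.trans_le ht.1).le _)

theorem forall_ge_of_step {φ : ℝ → ℝ} {P : ℝ → Prop} {a δ : ℝ} (hδ : 0 < δ)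
    (hφc : ContinuousOn φ (Ici a)) (hφ : ∀ y, a ≤ y → y + δ ≤ φ y)
    (hbase : ∀ x ∈ Icc a (φ a), P x) (hstep : ∀ y, a ≤ y → P y → P (φ y)) :
    ∀ x, a ≤ x → P x := by
  have hreach : ∀ n : ℕ, ∀ x ∈ Icc a (φ a + n * δ), P x := by
    intro n
    induction n with
    | zero => simpa using hbase
    | succ n ih =>
      rintro x ⟨hax, hxn⟩
      rcases le_or_gt x (φ a) with hx | hx
      · exact hbase x ⟨hax, hx⟩
      obtain ⟨y, ⟨hay, hyx⟩, rfl⟩ := intermediate_value_Icc hax (hφc.mono Icc_subset_Ici_self)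
        ⟨hx.le, by linarith [hφ x hax]⟩
      refine hstep y hay (ih y ⟨hay, ?_⟩)
      push_cast at hxn
      linarith [hφ y hay]
  intro x hx
  obtain ⟨n, hn⟩ := exists_nat_ge ((x - φ a) / δ)
  refine hreach n x ⟨hx, ?_⟩
  rw [div_le_iff₀ hδ] at hn
  linarith

theorem rpow_neg_le_mul_rpow_neg {x y c β : ℝ} (hx : 0 < x) (hy : 0 < y) (hxy : x ≤ c * y)
    (hβ : 0 ≤ β) : y ^ (-β) ≤ c ^ β * x ^ (-β) := by
  have hc : 0 < c := pos_of_mul_pos_left (hx.trans_le hxy) hy.le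
  rw [Real.rpow_neg hy.le, Real.rpow_neg hx.le, ← div_eq_mul_inv,
    inv_le_iff_one_le_mul₀' (by positivity), ← mul_div_assoc, one_le_div (by positivity),
    mul_comm, ← Real.mul_rpow hc.le hy.le]
  exact Real.rpow_le_rpow hx.le hxy hβ

theorem exists_le_mul_rpow_neg_of_step {f φ : ℝ → ℝ} {a b δ β θ K : ℝ} (hb : 0 < b)
    (hba : b ≤ a) (hδ : 0 < δ) (hβ : 0 ≤ β) (hθ : 0 ≤ θ) (hθβ : 2 ^ β * θ ≤ 1 / 2) (hK : 0 ≤ K)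
    (hfc : ContinuousOn f (Icc b (φ a))) (hφc : ContinuousOn φ (Ici a))
    (hφ : ∀ y, a ≤ y → y + δ ≤ φ y ∧ φ y ≤ 2 * y)
    (hstep : ∀ y, a ≤ y → f (φ y) ≤ θ * f y + K * y ^ (-β)) :
    ∃ C, 0 < C ∧ ∀ x, b ≤ x → f x ≤ C * x ^ (-β) := by
  have haφ : a ≤ φ a := by linarith [hφ a le_rfl]
  obtain ⟨B, hB⟩ := isCompact_Icc.bddAbove_image hfc
  set M := max B 0 * φ a ^ β + 2 * 2 ^ β * K + 1
  have hBM : 0 ≤ max B 0 * φ a ^ β :=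
    mul_nonneg (le_max_right _ _) (Real.rpow_nonneg (by linarith) _)
  have hK2 : 0 ≤ 2 * 2 ^ β * K := by positivity
  have hM : 0 < M := by linarith
  have hbase : ∀ x ∈ Icc b (φ a), f x ≤ M * x ^ (-β) := fun x hx => calc
    f x ≤ max B 0 * 1 := by simpa using le_max_of_le_left (hB (mem_image_of_mem f hx))
    _ ≤ max B 0 * (φ a ^ β * x ^ (-β)) := by
      gcongr
      simpa using rpow_neg_le_mul_rpow_neg (hb.trans_le hx.1) one_pos (by simpa using hx.2) hβ
    _ ≤ M * x ^ (-β) := by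
      rw [← mul_assoc]
      gcongr
      · exact Real.rpow_nonneg (hb.trans_le hx.1).le _
      · linarith
  have hstep' : ∀ y, a ≤ y → f y ≤ M * y ^ (-β) → f (φ y) ≤ M * φ y ^ (-β) := by
    intro y hy hfy
    have hy0 : 0 < y := hb.trans_le (hba.trans hy)
    have hφy : 0 < φ y := by linarith [hφ y hy]
    calc f (φ y) ≤ θ * (M * y ^ (-β)) + K * y ^ (-β) := by
          linarith [hstep y hy, mul_le_mul_of_nonneg_left hfy hθ]
      _ = (θ * M + K) * y ^ (-β) := by ring
      _ ≤ (θ * M + K) * (2 ^ β * φ y ^ (-β)) := by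
        gcongr
        exact rpow_neg_le_mul_rpow_neg hφy hy0 (hφ y hy).2 hβ
      _ ≤ M * φ y ^ (-β) := by
        rw [← mul_assoc]
        gcongr
        nlinarith [mul_le_mul_of_nonneg_right hθβ hM.le]
  refine ⟨M, hM, fun x hx => ?_⟩
  rcases le_or_gt x a with hxa | hxa
  · exact hbase x ⟨hx, hxa.trans haφ⟩
  exact forall_ge_of_step hδ hφc (fun y hy => (hφ y hy).1)
    (fun x hx => hbase x ⟨hba.trans hx.1, hx.2⟩) hstep' x hxa.le

theorem mul_rpow_le_self {L x α : ℝ} (hα : α < 1) (hL : 0 ≤ L) (hx : L ^ (1 - α)⁻¹ ≤ x) :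
    L * x ^ α ≤ x := by
  have hx0 : 0 ≤ x := (Real.rpow_nonneg hL _).trans hx
  have hLx : L ≤ x ^ (1 - α) := by
    simpa [Real.rpow_inv_rpow hL (sub_ne_zero.2 hα.ne')] using
      Real.rpow_le_rpow (Real.rpow_nonneg hL _) hx (sub_nonneg.2 hα.le)
  calc L * x ^ α ≤ x ^ (1 - α) * x ^ α := by gcongr
    _ = x := by rw [← Real.rpow_add' hx0 (by norm_num), sub_add_cancel, Real.rpow_one]

def TwoPointIntegralIneq (f : ℝ → ℝ) (α p A C₁ C₂ C₃ : ℝ) : Prop :=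
  ∀ x₁ x₂ : ℝ, 1 ≤ x₁ → x₁ < x₂ →
    f x₂ + C₁ * (∫ x in x₁..x₂, x ^ (-α) * f x) ≤
      A * f x₁ + C₂ * (∫ x in x₁..x₂, x ^ (-p)) + C₃ * x₁ ^ (-p)

namespace TwoPointIntegralIneq

variable {f : ℝ → ℝ} {α p A C₁ C₂ C₃ : ℝ}

theorem add_integral_le (h : TwoPointIntegralIneq f α p A C₁ C₂ C₃) (hp : 0 ≤ p) (hC₂ : 0 ≤ C₂)
    {x₁ x₂ : ℝ} (h₁ : 1 ≤ x₁) (h₁₂ : x₁ < x₂) :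
    f x₂ + C₁ * (∫ x in x₁..x₂, x ^ (-α) * f x) ≤ A * f x₁ + (C₂ * (x₂ - x₁) + C₃) * x₁ ^ (-p) := by
  have := integral_rpow_le_of_nonpos (by linarith) h₁₂.le (neg_nonpos.2 hp)
  nlinarith [h x₁ x₂ h₁ h₁₂]

theorem apply_le_of_mem_Icc (h : TwoPointIntegralIneq f α p A C₁ C₂ C₃) (hp : 0 ≤ p) (hA : 1 ≤ A)
    (hC₁ : 0 ≤ C₁) (hC₂ : 0 ≤ C₂) (hC₃ : 0 ≤ C₃) (hf : ∀ x, 1 ≤ x → 0 ≤ f x)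
    {x ξ b : ℝ} (hx : 1 ≤ x) (hξ : ξ ∈ Icc x b) :
    f b ≤ A * f ξ + (C₂ * (b - x) + C₃) * x ^ (-p) := by
  have hx0 : 0 < x := by linarith
  have hrem_nonneg : 0 ≤ (C₂ * (b - x) + C₃) * x ^ (-p) :=
    mul_nonneg (by nlinarith [hξ.1, hξ.2]) (Real.rpow_nonneg hx0.le _)
  have hrem : (C₂ * (b - ξ) + C₃) * ξ ^ (-p) ≤ (C₂ * (b - x) + C₃) * x ^ (-p) :=
    mul_le_mul (by nlinarith [hξ.1]) (Real.rpow_le_rpow_of_nonpos hx0 hξ.1 (neg_nonpos.2 hp))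
      (Real.rpow_nonneg (by linarith [hξ.1]) _) (by nlinarith [hξ.1, hξ.2])
  rcases hξ.2.eq_or_lt with rfl | hξb
  · nlinarith [hf ξ (hx.trans hξ.1)]
  have hint : 0 ≤ ∫ t in ξ..b, t ^ (-α) * f t :=
    intervalIntegral.integral_nonneg hξb.le fun t ht =>
      mul_nonneg (Real.rpow_nonneg (by linarith [hξ.1, ht.1]) _) (hf t (by linarith [hξ.1, ht.1]))
  nlinarith [h.add_integral_le hp hC₂ (hx.trans hξ.1) hξb]

theorem apply_add_le (h : TwoPointIntegralIneq f α p A C₁ C₂ C₃) (hα : 0 ≤ α) (hp : 0 ≤ p)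
    (hA : 1 ≤ A) (hC₁ : 0 < C₁) (hC₂ : 0 ≤ C₂) (hC₃ : 0 ≤ C₃) (hfc : ContinuousOn f (Ici 1))
    (hf : ∀ x, 1 ≤ x → 0 ≤ f x) {x δ : ℝ} (hx : 1 ≤ x) (hδ : 0 < δ) :
    f (x + δ) ≤ A * ((x + δ) ^ α / (C₁ * δ)) * (A * f x + (C₂ * δ + C₃) * x ^ (-p)) +
      (C₂ * δ + C₃) * x ^ (-p) := by
  set R := (C₂ * δ + C₃) * x ^ (-p)
  have hxδ : x < x + δ := by linarith
  obtain ⟨ξ, hξ, hξint⟩ := exists_mul_le_integral_rpow_neg_mul (f := f) (by linarith) hxδ.le hα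
    (hfc.mono fun t ht => hx.trans ht.1) fun t ht => hf t (hx.trans ht.1)
  rw [add_sub_cancel_left] at hξint
  have hint : C₁ * ∫ t in x..x + δ, t ^ (-α) * f t ≤ A * f x + R := by
    have := h.add_integral_le hp hC₂ hx hxδ
    rw [add_sub_cancel_left] at this
    linarith [hf (x + δ) (by linarith)]
  have hfξ : f ξ ≤ (x + δ) ^ α / (C₁ * δ) * (A * f x + R) := by
    have hpow : 0 < (x + δ) ^ α := Real.rpow_pos_of_pos (by linarith) _
    rw [div_mul_eq_mul_div, le_div_iff₀ (by positivity)]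
    calc f ξ * (C₁ * δ) = (x + δ) ^ α * (C₁ * (δ * ((x + δ) ^ (-α) * f ξ))) := by
          rw [Real.rpow_neg (by linarith)]
          field_simp
      _ ≤ (x + δ) ^ α * (A * f x + R) := by
          gcongr
          exact (mul_le_mul_of_nonneg_left hξint hC₁.le).trans hint
  have hfb := h.apply_le_of_mem_Icc hp hA hC₁.le hC₂ hC₃ hf hx hξ
  rw [add_sub_cancel_left] at hfb
  calc f (x + δ) ≤ A * f ξ + R := hfb
    _ ≤ A * ((x + δ) ^ α / (C₁ * δ) * (A * f x + R)) + R := by gcongr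
    _ = _ := by ring

theorem apply_add_mul_rpow_le (h : TwoPointIntegralIneq f α p A C₁ C₂ C₃) (hα₀ : 0 ≤ α)
    (hα₁ : α ≤ 1) (hp : 0 ≤ p) (hA : 1 ≤ A) (hC₁ : 0 < C₁) (hC₂ : 0 ≤ C₂) (hC₃ : 0 ≤ C₃)
    (hfc : ContinuousOn f (Ici 1)) (hf : ∀ x, 1 ≤ x → 0 ≤ f x) {L x : ℝ} (hL : 0 < L)
    (hx : 1 ≤ x) (hLx : L * x ^ α ≤ x) :
    f (x + L * x ^ α) ≤
      2 * A ^ 2 / (C₁ * L) * f x + (2 * A / (C₁ * L) + 1) * (C₂ * L + C₃) * x ^ (α - p) := by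
  have hx0 : 0 < x := by linarith
  have hxα : 1 ≤ x ^ α := Real.one_le_rpow hx hα₀
  have hxp : 0 ≤ x ^ (-p) := Real.rpow_nonneg hx0.le _
  have hfrac : (x + L * x ^ α) ^ α / (C₁ * (L * x ^ α)) ≤ 2 / (C₁ * L) := by
    have : (x + L * x ^ α) ^ α ≤ 2 * x ^ α := calc
      (x + L * x ^ α) ^ α ≤ (2 * x) ^ α := by gcongr; linarith
      _ = 2 ^ α * x ^ α := Real.mul_rpow zero_le_two hx0.le
      _ ≤ 2 * x ^ α := by gcongr; exact Real.rpow_le_self_of_one_le one_le_two hα₁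
    rw [div_le_div_iff₀ (by positivity) (by positivity)]
    nlinarith [mul_pos hC₁ hL]
  have hrem : (C₂ * (L * x ^ α) + C₃) * x ^ (-p) ≤ (C₂ * L + C₃) * x ^ (α - p) := by
    rw [sub_eq_add_neg, Real.rpow_add hx0]
    nlinarith [mul_le_mul_of_nonneg_left hxα (mul_nonneg hC₃ hxp)]
  calc f (x + L * x ^ α)
      ≤ A * ((x + L * x ^ α) ^ α / (C₁ * (L * x ^ α))) *
          (A * f x + (C₂ * (L * x ^ α) + C₃) * x ^ (-p)) + (C₂ * (L * x ^ α) + C₃) * x ^ (-p) :=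
        h.apply_add_le hα₀ hp hA hC₁ hC₂ hC₃ hfc hf hx (by positivity)
    _ ≤ A * (2 / (C₁ * L)) * (A * f x + (C₂ * L + C₃) * x ^ (α - p)) +
          (C₂ * L + C₃) * x ^ (α - p) := by
        have := hf x hx
        gcongr
    _ = _ := by ring

end TwoPointIntegralIneq

theorem decay_lemma_general (p α : ℝ) (hp : 1 < p) (hα0 : 0 ≤ α) (hα1 : α < 1)
    (f : ℝ → ℝ) (hfc : ContinuousOn f (Set.Ici 1))
    (hfnn : ∀ x : ℝ, 1 ≤ x → 0 ≤ f x)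
    (C₀ C₁ C₂ C₃ : ℝ) (hC₁ : 0 < C₁) (hC₂ : 0 ≤ C₂) (hC₃ : 0 ≤ C₃)
    (hineq : ∀ x₁ x₂ : ℝ, 1 ≤ x₁ → x₁ < x₂ →
      f x₂ + C₁ * (∫ x in x₁..x₂, x ^ (-α) * f x) ≤
        C₀ * f x₁ + C₂ * (∫ x in x₁..x₂, x ^ (-p)) + C₃ * x₁ ^ (-p)) :
    ∃ C : ℝ, 0 < C ∧ ∀ x : ℝ, 1 ≤ x → f x ≤ C * x ^ (-p + α) := by
  -- With `A ≥ 1` the inequality also holds, trivially, for `x₁ = x₂`.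
  set A := max C₀ 1
  have hA : 1 ≤ A := le_max_right _ _
  have hineqA : TwoPointIntegralIneq f α p A C₁ C₂ C₃ := fun x₁ x₂ h₁ h₁₂ =>
    (hineq x₁ x₂ h₁ h₁₂).trans (by gcongr; exacts [hfnn x₁ h₁, le_max_left _ _])
  -- chosen so that `2 ^ (p - α) * θ = 1 / 2` for the contraction factor `θ` below
  set L := 4 * 2 ^ (p - α) * A ^ 2 / C₁ with hL_def
  have hL : 0 < L := by positivity
  set a := max 1 (L ^ (1 - α)⁻¹)
  have ha : ∀ y, a ≤ y → 1 ≤ y := fun y hy => (le_max_left _ _).trans hy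
  have hLa : ∀ y, a ≤ y → L * y ^ α ≤ y := fun y hy =>
    mul_rpow_le_self hα1 hL.le ((le_max_right _ _).trans hy)
  obtain ⟨C, hC, hbound⟩ := exists_le_mul_rpow_neg_of_step (φ := fun y => y + L * y ^ α)
    (a := a) (δ := L) (β := p - α) (θ := 2 * A ^ 2 / (C₁ * L))
    (K := (2 * A / (C₁ * L) + 1) * (C₂ * L + C₃))
    one_pos (le_max_left _ _) hL (by linarith) (by positivity)
    (le_of_eq (by rw [hL_def]; field_simp; ring)) (by positivity) (hfc.mono Icc_subset_Ici_self)
    (continuous_id.add (continuous_const.mul (Real.continuous_rpow_const hα0))).continuousOn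
    (fun y hy => ⟨by nlinarith [Real.one_le_rpow (ha y hy) hα0], by linarith [hLa y hy]⟩)
    (fun y hy => by
      simpa only [neg_sub] using hineqA.apply_add_mul_rpow_le hα0 hα1.le (by linarith) hA hC₁
        hC₂ hC₃ hfc hfnn hL (ha y hy) (hLa y hy))
  exact ⟨C, hC, fun x hx => by simpa only [neg_add_eq_sub, neg_sub] using hbound x hx⟩

/-- Decay lemma: a continuous nonnegative function on `[1, ∞)` satisfying the
two-point integral inequality decays like `x ^ (-p + α)`. -/
theorem decay_lemma (p α : ℝ) (hp : 1 < p) (hα0 : 0 ≤ α) (hα1 : α < 1)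
    (f : ℝ → ℝ) (hfc : ContinuousOn f (Set.Ici 1))
    (hfnn : ∀ x : ℝ, 1 ≤ x → 0 ≤ f x)
    (C₀ C₁ C₂ C₃ : ℝ) (hC₀ : 0 < C₀) (hC₁ : 0 < C₁) (hC₂ : 0 ≤ C₂) (hC₃ : 0 ≤ C₃)
    (hineq : ∀ x₁ x₂ : ℝ, 1 ≤ x₁ → x₁ < x₂ →
      f x₂ + C₁ * (∫ x in x₁..x₂, x ^ (-α) * f x) ≤
        C₀ * f x₁ + C₂ * (∫ x in x₁..x₂, x ^ (-p)) + C₃ * x₁ ^ (-p)) :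
    ∃ C : ℝ, 0 < C ∧ ∀ x : ℝ, 1 ≤ x → f x ≤ C * x ^ (-p + α) :=
  decay_lemma_general p α hp hα0 hα1 f hfc hfnn C₀ C₁ C₂ C₃ hC₁ hC₂ hC₃ hineq
end

section
/- Let p > 1, 0 ≤ α < 1, and let C₀ ≥ 1, C₁ > 0 and C̃₃ ≥ 0 be constants. Let x ≥ 1 and let g : [x, 2x] → [0,∞) be continuous, satisfying g(x₂) + C₁ ∫_{x₁}^{x₂} t^{−α} g(t) dt ≤ C₀ g(x₁) + C̃₃ x₁^{−p+α} for all x ≤ x₁ < x₂ ≤ 2x. Then g(2x) ≤ (2^α C₀² / C₁) x^{−1+α} g(x) + ((2^α C₀ / C₁) + 1) C̃₃ x^{−p+α}. -/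
/-!
Let `ξ` be a minimum point of `g` on `[x, 2x]`. The two-point inequality on `[x, 2x]` bounds
`C₁ x (2x)^{-α} g(ξ)`, a lower bound for `C₁ ∫_x^{2x} t^{-α} g`, by `C₀ g(x) + C₃ x^{-p+α}`;
the two-point inequality on `[ξ, 2x]`, with its nonnegative integral dropped, bounds `g(2x)` by
`C₀ g(ξ) + C₃ x^{-p+α}`. Chaining the two gives the claim, since `x (2x)^{-α} = x^{1-α} / 2^α`.
-/

open MeasureTheory Set intervalIntegral

def TwoPointIntegralBound (g : ℝ → ℝ) (α β C₀ C₁ C₃ a b : ℝ) : Prop :=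
  ∀ x₁ x₂ : ℝ, a ≤ x₁ → x₁ < x₂ → x₂ ≤ b →
    g x₂ + C₁ * (∫ t in x₁..x₂, t ^ (-α) * g t) ≤ C₀ * g x₁ + C₃ * x₁ ^ β

section

variable {g : ℝ → ℝ} {α β C₀ C₁ C₃ a b ξ : ℝ}

lemma sub_mul_rpow_neg_mul_le_integral (ha : 0 < a) (hab : a ≤ b) (hα : 0 ≤ α)
    (hg : ContinuousOn g (Icc a b)) (hξ : IsMinOn g (Icc a b) ξ) (hgξ : 0 ≤ g ξ) :
    (b - a) * (b ^ (-α) * g ξ) ≤ ∫ t in a..b, t ^ (-α) * g t := by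
  have hpos : ∀ t ∈ Icc a b, 0 < t := fun t ht => ha.trans_le ht.1
  have hint : IntervalIntegrable (fun t => t ^ (-α) * g t) volume a b := by
    refine ContinuousOn.intervalIntegrable ?_
    rw [uIcc_of_le hab]
    exact (continuousOn_id.rpow_const fun t ht => .inl (hpos t ht).ne').mul hg
  calc (b - a) * (b ^ (-α) * g ξ) = ∫ _ in a..b, b ^ (-α) * g ξ := by
        rw [intervalIntegral.integral_const, smul_eq_mul]
    _ ≤ ∫ t in a..b, t ^ (-α) * g t :=
      integral_mono_on hab intervalIntegrable_const hint fun t ht =>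
        mul_le_mul (Real.rpow_le_rpow_of_nonpos (hpos t ht) ht.2 (neg_nonpos.2 hα)) (hξ ht)
          hgξ (Real.rpow_nonneg (hpos t ht).le _)

namespace TwoPointIntegralBound

lemma le_of_mem (h : TwoPointIntegralBound g α β C₀ C₁ C₃ a b) (ha : 0 < a) (hβ : β ≤ 0)
    (hC₀ : 1 ≤ C₀) (hC₁ : 0 ≤ C₁) (hC₃ : 0 ≤ C₃) (hg : ∀ t ∈ Icc a b, 0 ≤ g t)
    (hξ : ξ ∈ Icc a b) : g b ≤ C₀ * g ξ + C₃ * a ^ β := by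
  have hgξ : g ξ ≤ C₀ * g ξ := le_mul_of_one_le_left (hg ξ hξ) hC₀
  have hξβ : C₃ * ξ ^ β ≤ C₃ * a ^ β :=
    mul_le_mul_of_nonneg_left (Real.rpow_le_rpow_of_nonpos ha hξ.1 hβ) hC₃
  have hCa : 0 ≤ C₃ * a ^ β := mul_nonneg hC₃ (Real.rpow_nonneg ha.le _)
  rcases hξ.2.eq_or_lt with rfl | hξb
  · linarith
  have hI : 0 ≤ ∫ t in ξ..b, t ^ (-α) * g t :=
    integral_nonneg hξb.le fun t ht =>
      mul_nonneg (Real.rpow_nonneg (ha.le.trans (hξ.1.trans ht.1)) _)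
        (hg t ⟨hξ.1.trans ht.1, ht.2⟩)
  linarith [h ξ b hξ.1 hξb le_rfl, mul_nonneg hC₁ hI]

lemma le_div_of_isMinOn (h : TwoPointIntegralBound g α β C₀ C₁ C₃ a b) (ha : 0 < a)
    (hab : a < b) (hα : 0 ≤ α) (hC₁ : 0 < C₁) (hg : ContinuousOn g (Icc a b))
    (hξ : IsMinOn g (Icc a b) ξ) (hgξ : 0 ≤ g ξ) :
    g ξ ≤ (C₀ * g a + C₃ * a ^ β) / (C₁ * (b - a) * b ^ (-α)) := by
  have hb : 0 < b := ha.trans hab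
  rw [le_div_iff₀ (by have := sub_pos.2 hab; positivity)]
  have hg_b : 0 ≤ g b := hgξ.trans (hξ ⟨hab.le, le_rfl⟩)
  have hI := mul_le_mul_of_nonneg_left
    (sub_mul_rpow_neg_mul_le_integral ha hab.le hα hg hξ hgξ) hC₁.le
  linarith [h a b le_rfl hab le_rfl]

end TwoPointIntegralBound

end

lemma mul_two_mul_rpow_neg {x : ℝ} (hx : 0 < x) (α : ℝ) :
    x * (2 * x) ^ (-α) = (2 ^ α * x ^ (-1 + α))⁻¹ := by
  rw [Real.mul_rpow zero_lt_two.le hx.le, Real.rpow_add hx, Real.rpow_neg_one,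
    Real.rpow_neg hx.le, Real.rpow_neg zero_lt_two.le]
  field_simp

/-- Doubling (iteration) step of the decay lemma: a continuous nonnegative function on
`[x, 2x]` satisfying the two-point integral inequality gains a factor `x ^ (-1 + α)`
over one doubling of the argument. -/
theorem doubling_step (p α : ℝ) (hp : 1 < p) (hα0 : 0 ≤ α) (hα1 : α < 1)
    (C₀ C₁ C₃ : ℝ) (hC₀ : 1 ≤ C₀) (hC₁ : 0 < C₁) (hC₃ : 0 ≤ C₃)
    (x : ℝ) (hx : 1 ≤ x) (g : ℝ → ℝ)
    (hgc : ContinuousOn g (Set.Icc x (2 * x)))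
    (hgnn : ∀ t ∈ Set.Icc x (2 * x), 0 ≤ g t)
    (hineq : ∀ x₁ x₂ : ℝ, x ≤ x₁ → x₁ < x₂ → x₂ ≤ 2 * x →
      g x₂ + C₁ * (∫ t in x₁..x₂, t ^ (-α) * g t) ≤ C₀ * g x₁ + C₃ * x₁ ^ (-p + α)) :
    g (2 * x) ≤ (2 : ℝ) ^ α * C₀ ^ 2 / C₁ * x ^ (-1 + α) * g x
      + ((2 : ℝ) ^ α * C₀ / C₁ + 1) * C₃ * x ^ (-p + α) := by
  have hx0 : 0 < x := one_pos.trans_le hx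
  have h2x : x < 2 * x := by linarith
  have hbound : TwoPointIntegralBound g α (-p + α) C₀ C₁ C₃ x (2 * x) := hineq
  obtain ⟨ξ, hξ, hmin⟩ := isCompact_Icc.exists_isMinOn (nonempty_Icc.2 h2x.le) hgc
  have hend := hbound.le_of_mem hx0 (by linarith) hC₀ hC₁.le hC₃ hgnn hξ
  have hgξ := hbound.le_div_of_isMinOn hx0 h2x hα0 hC₁ hgc hmin (hgnn ξ hξ)
  rw [show 2 * x - x = x by ring, mul_assoc, mul_two_mul_rpow_neg hx0, ← div_eq_mul_inv,
    div_div_eq_mul_div] at hgξ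
  have hu : x ^ (-1 + α) ≤ 1 := Real.rpow_le_one_of_one_le_of_nonpos hx (by linarith)
  have hv : 0 ≤ C₃ * x ^ (-p + α) := mul_nonneg hC₃ (Real.rpow_nonneg hx0.le _)
  have hdrop : (2 : ℝ) ^ α * C₀ / C₁ * (C₃ * x ^ (-p + α)) * x ^ (-1 + α)
      ≤ (2 : ℝ) ^ α * C₀ / C₁ * (C₃ * x ^ (-p + α)) :=
    mul_le_of_le_one_right (by positivity) hu
  calc g (2 * x) ≤ C₀ * g ξ + C₃ * x ^ (-p + α) := hend
    _ ≤ C₀ * ((C₀ * g x + C₃ * x ^ (-p + α)) * (2 ^ α * x ^ (-1 + α)) / C₁)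
        + C₃ * x ^ (-p + α) := by gcongr
    _ ≤ _ := by linear_combination hdrop
end

section
/- Fix real numbers M and a with 0 < |a| < M, and set Δ(r) = r² − 2Mr + a², r₊ = M + √(M² − a²), r₋ = M − √(M² − a²), r*(r) = ∫_M^r (s² + a²)/Δ(s) ds for r ∈ (r₋, r₊), and κ₋ = (r₋ − r₊)/(4Mr₋). Then lim_{r → r₋⁺} r*(r) / ((1/(2κ₋)) · ln(r − r₋)) = 1. -/
/-!
Since `Δ(s) = (s - r₋)(s - r₊)`, the integrand of `r*` splits into partial fractions
`1 + A/(s - r₋) + B/(s - r₊)` with `A = (r₋² + a²)/(r₋ - r₊)`, so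
`r*(r) = A ln(r - r₋) + G(r)` with `G` continuous at `r₋`. As `r₋ r₊ = a²` and `r₋ + r₊ = 2M`,
one finds `A = 2Mr₋/(r₋ - r₊) = 1/(2κ₋) ≠ 0`, and as `r → r₋⁺` the logarithm dominates the
bounded part `G`.
-/

open MeasureTheory

noncomputable def KerrDelta (M a r : ℝ) : ℝ := r ^ 2 - 2 * M * r + a ^ 2

noncomputable def rPlus (M a : ℝ) : ℝ := M + Real.sqrt (M ^ 2 - a ^ 2)

noncomputable def rMinus (M a : ℝ) : ℝ := M - Real.sqrt (M ^ 2 - a ^ 2)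

/-- The tortoise coordinate `r*`, normalized by `r*(M) = 0`. -/
noncomputable def rStar (M a r : ℝ) : ℝ := ∫ s in M..r, (s ^ 2 + a ^ 2) / KerrDelta M a s

/-- Surface gravity of the Cauchy horizon. -/
noncomputable def kappaMinus (M a : ℝ) : ℝ := (rMinus M a - rPlus M a) / (4 * M * rMinus M a)

open Filter Topology Set

theorem tendsto_mul_log_sub_add_div_self (p A : ℝ) {G : ℝ → ℝ} (hA : A ≠ 0)
    (hG : ContinuousAt G p) :
    Tendsto (fun x => (A * Real.log (x - p) + G x) / (A * Real.log (x - p))) (𝓝[>] p) (𝓝 1) := by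
  have hlog : Tendsto (fun x => Real.log (x - p)) (𝓝[>] p) atBot := by
    refine Real.tendsto_log_nhdsGT_zero.comp
      (tendsto_nhdsWithin_of_tendsto_nhds_of_eventually_within _ ?_
        (eventually_nhdsWithin_of_forall fun x hx => mem_Ioi.2 (sub_pos.2 hx)))
    simpa using ((continuous_sub_right p).tendsto p).mono_left nhdsWithin_le_nhds
  have hsmall : Tendsto (fun x => G x / A / Real.log (x - p)) (𝓝[>] p) (𝓝 0) :=
    ((hG.tendsto.mono_left nhdsWithin_le_nhds).div_const A).div_atBot hlog
  have hone := hsmall.const_add 1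
  rw [add_zero] at hone
  refine hone.congr' ?_
  filter_upwards [hlog.eventually_lt_atBot 0] with x hx
  rw [add_div, div_self (mul_ne_zero hA hx.ne), div_div]

noncomputable def tortoisePrimitive (p q c x : ℝ) : ℝ :=
  x + (p ^ 2 + c) / (p - q) * Real.log (x - p) + (q ^ 2 + c) / (q - p) * Real.log (q - x)

section tortoisePrimitive

variable {p q c x : ℝ}

theorem hasDerivAt_tortoisePrimitive (hx : x ∈ Ioo p q) :
    HasDerivAt (tortoisePrimitive p q c) ((x ^ 2 + c) / ((x - p) * (x - q))) x := by
  have hxp : x - p ≠ 0 := (sub_pos.2 hx.1).ne'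
  have hqx : q - x ≠ 0 := (sub_pos.2 hx.2).ne'
  have hpq : p - q ≠ 0 := (sub_neg.2 (hx.1.trans hx.2)).ne
  have hlog_p := ((hasDerivAt_id' x).sub_const p).log hxp
  have hlog_q := ((hasDerivAt_id' x).const_sub q).log hqx
  refine (((hasDerivAt_id' x).add (hlog_p.const_mul ((p ^ 2 + c) / (p - q)))).add
    (hlog_q.const_mul ((q ^ 2 + c) / (q - p)))).congr_deriv ?_
  have hxq : x - q ≠ 0 := by rwa [← neg_sub, neg_ne_zero]
  have hqp : q - p ≠ 0 := by rwa [← neg_sub, neg_ne_zero]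
  field_simp
  ring

theorem integral_eq_tortoisePrimitive_sub {x₀ r : ℝ} (hx₀ : x₀ ∈ Ioo p q) (hr : r ∈ Ioo p q) :
    ∫ s in x₀..r, (s ^ 2 + c) / ((s - p) * (s - q)) =
      tortoisePrimitive p q c r - tortoisePrimitive p q c x₀ := by
  have hsub : uIcc x₀ r ⊆ Ioo p q := ordConnected_Ioo.uIcc_subset hx₀ hr
  refine intervalIntegral.integral_eq_sub_of_hasDerivAt
    (fun x hx => hasDerivAt_tortoisePrimitive (hsub hx)) (ContinuousOn.intervalIntegrable ?_)
  refine continuousOn_of_forall_continuousAt fun x hx => ?_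
  have hx' := hsub hx
  exact ContinuousAt.div (by fun_prop) (by fun_prop)
    (mul_ne_zero (sub_pos.2 hx'.1).ne' (sub_neg.2 hx'.2).ne)

theorem tendsto_tortoisePrimitive_sub_div_log (hpq : p < q) (hc : p ^ 2 + c ≠ 0) (K : ℝ) :
    Tendsto (fun x => (tortoisePrimitive p q c x - K) / ((p ^ 2 + c) / (p - q) * Real.log (x - p)))
      (𝓝[>] p) (𝓝 1) := by
  have hA : (p ^ 2 + c) / (p - q) ≠ 0 := div_ne_zero hc (sub_neg.2 hpq).ne
  have hG : ContinuousAt (fun x => x + (q ^ 2 + c) / (q - p) * Real.log (q - x) - K) p := by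
    have : q - p ≠ 0 := (sub_pos.2 hpq).ne'
    fun_prop (disch := assumption)
  convert tendsto_mul_log_sub_add_div_self p _ hA hG using 2 with x
  simp only [tortoisePrimitive]
  ring

end tortoisePrimitive

section Kerr

variable {M a : ℝ}

theorem KerrDelta_eq_mul (h : a ^ 2 ≤ M ^ 2) (s : ℝ) :
    KerrDelta M a s = (s - rMinus M a) * (s - rPlus M a) := by
  have hsq := Real.sq_sqrt (sub_nonneg.2 h)
  simp only [KerrDelta, rMinus, rPlus]
  linear_combination hsq

theorem rMinus_lt_rPlus (h : a ^ 2 < M ^ 2) : rMinus M a < rPlus M a := by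
  have := Real.sqrt_pos.2 (sub_pos.2 h)
  simp only [rMinus, rPlus]
  linarith

theorem mem_Ioo_rMinus_rPlus (h : a ^ 2 < M ^ 2) : M ∈ Ioo (rMinus M a) (rPlus M a) := by
  have := Real.sqrt_pos.2 (sub_pos.2 h)
  constructor <;> simp only [rMinus, rPlus] <;> linarith

theorem rStar_eq_tortoisePrimitive_sub (h : a ^ 2 < M ^ 2) {r : ℝ}
    (hr : r ∈ Ioo (rMinus M a) (rPlus M a)) :
    rStar M a r = tortoisePrimitive (rMinus M a) (rPlus M a) (a ^ 2) r -
      tortoisePrimitive (rMinus M a) (rPlus M a) (a ^ 2) M := by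
  simp only [rStar, KerrDelta_eq_mul h.le]
  exact integral_eq_tortoisePrimitive_sub (mem_Ioo_rMinus_rPlus h) hr

theorem one_div_two_mul_kappaMinus (h : a ^ 2 ≤ M ^ 2) :
    1 / (2 * kappaMinus M a) = (rMinus M a ^ 2 + a ^ 2) / (rMinus M a - rPlus M a) := by
  have hsq := Real.sq_sqrt (sub_nonneg.2 h)
  have hres : rMinus M a ^ 2 + a ^ 2 = 2 * M * rMinus M a := by
    simp only [rMinus]
    linear_combination hsq
  rw [kappaMinus, hres, one_div, mul_div_assoc', inv_div, mul_comm 2, ← div_div]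
  ring

end Kerr

/-- Asymptotics of the tortoise coordinate at the Cauchy horizon:
`r*(r) / ((1/(2κ₋)) ln(r − r₋)) → 1` as `r → r₋⁺`. -/
theorem rStar_asymptotics_cauchyHorizon (M a : ℝ) (ha : 0 < |a|) (haM : |a| < M) :
    Filter.Tendsto
      (fun r => rStar M a r / (1 / (2 * kappaMinus M a) * Real.log (r - rMinus M a)))
      (nhdsWithin (rMinus M a) (Set.Ioi (rMinus M a))) (nhds 1) := by
  have h : a ^ 2 < M ^ 2 := sq_lt_sq.2 (haM.trans_le (le_abs_self M))
  have hres : rMinus M a ^ 2 + a ^ 2 ≠ 0 := by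
    have : a ≠ 0 := abs_pos.1 ha
    positivity
  rw [one_div_two_mul_kappaMinus h.le]
  refine (tendsto_tortoisePrimitive_sub_div_log (rMinus_lt_rPlus h) hres
    (tortoisePrimitive (rMinus M a) (rPlus M a) (a ^ 2) M)).congr' ?_
  filter_upwards [Ioo_mem_nhdsGT (rMinus_lt_rPlus h)] with r hr
  rw [rStar_eq_tortoisePrimitive_sub h hr]
end

section
/- Fix real numbers M and a with 0 < |a| < M, set Δ(r) = r² − 2Mr + a², r₊ = M + √(M² − a²), r₋ = M − √(M² − a²), μ(r) = Δ(r)/(r² + a²), and let r*(r) = ∫_M^r (s² + a²)/Δ(s) ds for r ∈ (r₋, r₊). Let ρ : ℝ → (r₋, r₊) be the inverse of the strictly decreasing bijection r ↦ 2r*(r). Then ρ is differentiable with ρ'(x) = μ(ρ(x))/2 for all x ∈ ℝ, and for every x ∈ ℝ one has ∫_{−∞}^{x} (−μ(ρ(t))) dt = 2(r₊ − ρ(x)) and ∫_{x}^{+∞} (−μ(ρ(t))) dt = 2(ρ(x) − r₋). -/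
open MeasureTheory

noncomputable def kerrMu (M a r : ℝ) : ℝ := KerrDelta M a r / (r ^ 2 + a ^ 2)

/-!
On `(r₋, r₊)` the map `r ↦ 2 r*(r)` has derivative `2 (r² + a²)/Δ = 2/μ < 0`, so its right
inverse `ρ` is a strictly decreasing bijection of `ℝ` onto `(r₋, r₊)`; being monotone with open
range it is continuous, and the inverse function theorem gives `ρ' = μ ∘ ρ / 2`. Hence `-μ ∘ ρ` is
the derivative `-2ρ'` of a monotone function whose limits at `∓∞` are the endpoints `r₊` and `r₋`,
and the half-line integrals are improper instances of the fundamental theorem of calculus.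
-/

open Set Filter Topology

theorem Monotone.continuous_of_isOpen_range {α β : Type*} [LinearOrder α] [TopologicalSpace α]
    [OrderTopology α] [LinearOrder β] [TopologicalSpace β] [OrderTopology β] [DenselyOrdered β]
    {f : α → β} (hf : Monotone f) (ho : IsOpen (range f)) : Continuous f :=
  continuous_iff_continuousAt.mpr fun x =>
    continuousAt_of_monotoneOn_of_image_mem_nhds (hf.monotoneOn univ) univ_mem
      (by rw [image_univ]; exact ho.mem_nhds (mem_range_self x))

theorem Antitone.continuous_of_isOpen_range {α β : Type*} [LinearOrder α] [TopologicalSpace α]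
    [OrderTopology α] [LinearOrder β] [TopologicalSpace β] [OrderTopology β] [DenselyOrdered β]
    {f : α → β} (hf : Antitone f) (ho : IsOpen (range f)) : Continuous f :=
  Monotone.continuous_of_isOpen_range (β := βᵒᵈ) hf.dual_right ho

section RangeIoo

variable {ι α : Type*} [Preorder ι] [Nonempty ι] [LinearOrder α] [DenselyOrdered α]
  [TopologicalSpace α] {f : ι → α} {p q : α}

theorem Antitone.tendsto_atBot_of_range_eq_Ioo [SupConvergenceClass α] (hf : Antitone f)
    (hrange : range f = Ioo p q) : Tendsto f atBot (𝓝 q) :=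
  tendsto_atBot_isLUB hf (hrange ▸ isLUB_Ioo (nonempty_Ioo.mp (hrange ▸ range_nonempty f)))

theorem Antitone.tendsto_atTop_of_range_eq_Ioo [InfConvergenceClass α] (hf : Antitone f)
    (hrange : range f = Ioo p q) : Tendsto f atTop (𝓝 p) :=
  tendsto_atTop_isGLB hf (hrange ▸ isGLB_Ioo (nonempty_Ioo.mp (hrange ▸ range_nonempty f)))

end RangeIoo

theorem range_eq_of_injOn_of_rightInverse {α β : Type*} {F : α → β} {ρ : β → α} {s : Set α}
    (hF : InjOn F s) (hρ : ∀ x, ρ x ∈ s) (hFρ : ∀ x, F (ρ x) = x) : range ρ = s :=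
  (range_subset_iff.mpr hρ).antisymm fun r hr => ⟨F r, hF (hρ _) hr (hFρ (F r))⟩

theorem StrictAntiOn.strictAnti_of_rightInverse {α β : Type*} [LinearOrder α] [LinearOrder β]
    {F : α → β} {ρ : β → α} {s : Set α} (hF : StrictAntiOn F s) (hρ : ∀ x, ρ x ∈ s)
    (hFρ : ∀ x, F (ρ x) = x) : StrictAnti ρ := fun x y hxy =>
  (hF.lt_iff_gt (hρ x) (hρ y)).mp (by rwa [hFρ, hFρ])

theorem StrictAntiOn.hasDerivAt_rightInverse {F ρ : ℝ → ℝ} {s : Set ℝ} {F' x : ℝ}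
    (hF : StrictAntiOn F s) (hs : IsOpen s) (hρ : ∀ x, ρ x ∈ s) (hFρ : ∀ x, F (ρ x) = x)
    (hF' : HasDerivAt F F' (ρ x)) (hF'0 : F' ≠ 0) : HasDerivAt ρ F'⁻¹ x := by
  have hcont : Continuous ρ :=
    (hF.strictAnti_of_rightInverse hρ hFρ).antitone.continuous_of_isOpen_range
      (range_eq_of_injOn_of_rightInverse hF.injOn hρ hFρ ▸ hs)
  exact hF'.of_local_left_inverse hcont.continuousAt hF'0 (Eventually.of_forall hFρ)

theorem integral_Iic_of_hasDerivAt_of_nonpos {g g' : ℝ → ℝ} {l x : ℝ}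
    (hderiv : ∀ t ∈ Iic x, HasDerivAt g (g' t) t) (hg' : ∀ t ∈ Iio x, g' t ≤ 0)
    (hg : Tendsto g atBot (𝓝 l)) : ∫ t in Iic x, g' t = g x - l := by
  have hreflected := integral_Ioi_of_hasDerivAt_of_nonneg' (g := fun t => g (-t))
    (g' := fun t => -g' (-t)) (a := -x)
    (fun t ht => ((hderiv (-t) (mem_Iic.mpr (neg_le.mp ht))).comp t (hasDerivAt_neg t)).congr_deriv
      (mul_neg_one _))
    (fun t ht => neg_nonneg.mpr (hg' (-t) (mem_Iio.mpr (neg_lt.mp ht))))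
    (hg.comp tendsto_neg_atTop_atBot)
  have hsubst := integral_comp_neg_Iic x (fun t => -g' (-t))
  simp only [neg_neg] at hsubst hreflected
  rw [← hsubst, integral_neg] at hreflected
  linarith

theorem KerrDelta_neg_of_mem_Ioo {M a r : ℝ} (hr : r ∈ Ioo (rMinus M a) (rPlus M a)) :
    KerrDelta M a r < 0 := by
  obtain ⟨hlo, hhi⟩ := hr
  simp only [rMinus, rPlus] at hlo hhi
  have hsqrt : 0 < Real.sqrt (M ^ 2 - a ^ 2) := by linarith
  have hsq := Real.sq_sqrt (Real.sqrt_pos.mp hsqrt).le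
  unfold KerrDelta
  nlinarith

theorem sq_add_sq_pos_of_KerrDelta_neg {M a r : ℝ} (h : KerrDelta M a r < 0) :
    0 < r ^ 2 + a ^ 2 := by
  unfold KerrDelta at h
  by_contra hle
  have hr : r = 0 := pow_eq_zero_iff two_ne_zero |>.mp (by nlinarith [sq_nonneg r, sq_nonneg a])
  subst hr
  nlinarith [sq_nonneg a]

theorem kerrMu_neg_of_mem_Ioo {M a r : ℝ} (hr : r ∈ Ioo (rMinus M a) (rPlus M a)) :
    kerrMu M a r < 0 :=
  have hΔ := KerrDelta_neg_of_mem_Ioo hr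
  div_neg_of_neg_of_pos hΔ (sq_add_sq_pos_of_KerrDelta_neg hΔ)

theorem mem_Ioo_rMinus_rPlus_self {M a : ℝ} (h : a ^ 2 < M ^ 2) :
    M ∈ Ioo (rMinus M a) (rPlus M a) := by
  have hsqrt : 0 < Real.sqrt (M ^ 2 - a ^ 2) := Real.sqrt_pos.mpr (sub_pos.mpr h)
  constructor <;> simp only [rMinus, rPlus] <;> linarith

theorem hasDerivAt_rStar {M a r : ℝ} (h : a ^ 2 < M ^ 2)
    (hr : r ∈ Ioo (rMinus M a) (rPlus M a)) :
    HasDerivAt (rStar M a) ((r ^ 2 + a ^ 2) / KerrDelta M a r) r := by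
  have hcont : ContinuousOn (fun s => (s ^ 2 + a ^ 2) / KerrDelta M a s)
      (Ioo (rMinus M a) (rPlus M a)) := fun s hs =>
    ContinuousAt.continuousWithinAt <| ContinuousAt.div (by fun_prop)
      (by unfold KerrDelta; fun_prop) (KerrDelta_neg_of_mem_Ioo hs).ne
  have hsub := ordConnected_Ioo.uIcc_subset (mem_Ioo_rMinus_rPlus_self h) hr
  exact intervalIntegral.integral_hasDerivAt_right (hcont.mono hsub).intervalIntegrable
    (hcont.stronglyMeasurableAtFilter isOpen_Ioo r hr)
    (hcont.continuousAt (isOpen_Ioo.mem_nhds hr))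

theorem hasDerivAt_two_mul_rStar {M a r : ℝ} (h : a ^ 2 < M ^ 2)
    (hr : r ∈ Ioo (rMinus M a) (rPlus M a)) :
    HasDerivAt (fun r => 2 * rStar M a r) (2 / kerrMu M a r) r :=
  ((hasDerivAt_rStar h hr).const_mul 2).congr_deriv
    (by rw [kerrMu, div_div_eq_mul_div, mul_div_assoc])

theorem strictAntiOn_two_mul_rStar {M a : ℝ} (h : a ^ 2 < M ^ 2) :
    StrictAntiOn (fun r => 2 * rStar M a r) (Ioo (rMinus M a) (rPlus M a)) := by
  refine strictAntiOn_of_hasDerivWithinAt_neg (f' := fun r => 2 / kerrMu M a r) (convex_Ioo _ _)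
    (fun r hr => (hasDerivAt_two_mul_rStar h hr).continuousAt.continuousWithinAt)
    (fun r hr => ?_) (fun r hr => ?_) <;> rw [interior_Ioo] at hr
  · exact (hasDerivAt_two_mul_rStar h hr).hasDerivWithinAt
  · exact div_neg_of_pos_of_neg two_pos (kerrMu_neg_of_mem_Ioo hr)

theorem rho_deriv_and_integrals_general (M a : ℝ) (haM : |a| < M)
    (ρ : ℝ → ℝ) (hρmem : ∀ x : ℝ, ρ x ∈ Set.Ioo (rMinus M a) (rPlus M a))
    (hρinv : ∀ x : ℝ, 2 * rStar M a (ρ x) = x) :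
    (∀ x : ℝ, HasDerivAt ρ (kerrMu M a (ρ x) / 2) x) ∧
    (∀ x : ℝ, (∫ t in Set.Iic x, -kerrMu M a (ρ t)) = 2 * (rPlus M a - ρ x)) ∧
    (∀ x : ℝ, (∫ t in Set.Ici x, -kerrMu M a (ρ t)) = 2 * (ρ x - rMinus M a)) := by
  have hMa : a ^ 2 < M ^ 2 := sq_lt_sq' (abs_lt.mp haM).1 (abs_lt.mp haM).2
  have hF := strictAntiOn_two_mul_rStar hMa
  have hderiv (x : ℝ) : HasDerivAt ρ (kerrMu M a (ρ x) / 2) x := by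
    simpa only [inv_div] using hF.hasDerivAt_rightInverse isOpen_Ioo hρmem hρinv
      (hasDerivAt_two_mul_rStar hMa (hρmem x))
      (div_neg_of_pos_of_neg two_pos (kerrMu_neg_of_mem_Ioo (hρmem x))).ne
  have hderiv_two_mul (t : ℝ) : HasDerivAt (fun t => 2 * ρ t) (kerrMu M a (ρ t)) t :=
    ((hderiv t).const_mul 2).congr_deriv (mul_div_cancel₀ _ two_ne_zero)
  have hμ (t : ℝ) : kerrMu M a (ρ t) ≤ 0 := (kerrMu_neg_of_mem_Ioo (hρmem t)).le
  have hanti := (hF.strictAnti_of_rightInverse hρmem hρinv).antitone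
  have hrange := range_eq_of_injOn_of_rightInverse hF.injOn hρmem hρinv
  refine ⟨hderiv, fun x => ?_, fun x => ?_⟩
  · rw [integral_neg, integral_Iic_of_hasDerivAt_of_nonpos
      (fun t _ => hderiv_two_mul t) (fun t _ => hμ t)
      ((hanti.tendsto_atBot_of_range_eq_Ioo hrange).const_mul 2)]
    ring
  · rw [integral_Ici_eq_integral_Ioi, integral_neg, integral_Ioi_of_hasDerivAt_of_nonpos'
      (fun t _ => hderiv_two_mul t) (fun t _ => hμ t)
      ((hanti.tendsto_atTop_of_range_eq_Ioo hrange).const_mul 2)]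
    ring

/-- If `ρ : ℝ → (r₋, r₊)` is the inverse of the strictly decreasing bijection
`r ↦ 2r*(r)`, then `ρ' = μ∘ρ/2` and the improper integrals of `−μ∘ρ` over half-lines
are `2(r₊ − ρ(x))` and `2(ρ(x) − r₋)`. -/
theorem rho_deriv_and_integrals (M a : ℝ) (ha : 0 < |a|) (haM : |a| < M)
    (ρ : ℝ → ℝ) (hρmem : ∀ x : ℝ, ρ x ∈ Set.Ioo (rMinus M a) (rPlus M a))
    (hρinv : ∀ x : ℝ, 2 * rStar M a (ρ x) = x) :
    (∀ x : ℝ, HasDerivAt ρ (kerrMu M a (ρ x) / 2) x) ∧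
    (∀ x : ℝ, (∫ t in Set.Iic x, -kerrMu M a (ρ t)) = 2 * (rPlus M a - ρ x)) ∧
    (∀ x : ℝ, (∫ t in Set.Ici x, -kerrMu M a (ρ t)) = 2 * (ρ x - rMinus M a)) :=
  rho_deriv_and_integrals_general M a haM ρ hρmem hρinv
end

section
/- Fix real numbers M and a with 0 < |a| < M, set Δ(r) = r² − 2Mr + a², r₊ = M + √(M² − a²), r₋ = M − √(M² − a²), μ(r) = Δ(r)/(r² + a²), κ₋ = (r₋ − r₊)/(4Mr₋), and let ρ : ℝ → (r₋, r₊) be the inverse of the map r ↦ 2∫_M^r (s² + a²)/Δ(s) ds. Then κ₋ < 0, and for every ε ∈ (0,1) there exists a constant C > 0 such that −μ(ρ(x)) ≤ C·e^{(1−ε)·κ₋·x} for all x ≥ 0. -/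
open MeasureTheory

set_option maxHeartbeats 2000000 in
/-- Exponential smallness of `−μ` in terms of twice the tortoise coordinate:
`−μ(ρ(x)) ≤ C e^{(1−ε) κ₋ x}` for `x ≥ 0`, where `ρ` is the inverse of `r ↦ 2r*(r)`. -/
theorem mu_exponential_decay (M a : ℝ) (ha : 0 < |a|) (haM : |a| < M)
    (ρ : ℝ → ℝ) (hρmem : ∀ x : ℝ, ρ x ∈ Set.Ioo (rMinus M a) (rPlus M a))
    (hρinv : ∀ x : ℝ, 2 * rStar M a (ρ x) = x) :
    kappaMinus M a < 0 ∧
    ∀ ε : ℝ, 0 < ε → ε < 1 → ∃ C : ℝ, 0 < C ∧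
      ∀ x : ℝ, 0 ≤ x →
        -kerrMu M a (ρ x) ≤ C * Real.exp ((1 - ε) * kappaMinus M a * x) := by
  have hM : 0 < M := (abs_nonneg a).trans_lt haM
  have ha0 : a ≠ 0 := fun h => by simp [h] at ha
  have ha2pos : 0 < a ^ 2 := by nlinarith [sq_abs a, mul_pos ha ha]
  have ha2 : a ^ 2 < M ^ 2 := by
    nlinarith [sq_abs a, mul_pos (sub_pos.2 haM) (lt_of_lt_of_le ha (by linarith : |a| ≤ M + |a|))]
  set s0 : ℝ := Real.sqrt (M ^ 2 - a ^ 2) with hs0def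
  have hs0sq : s0 ^ 2 = M ^ 2 - a ^ 2 := Real.sq_sqrt (by linarith)
  have hs0pos : 0 < s0 := Real.sqrt_pos.2 (by linarith)
  have hs0M : s0 < M := by nlinarith
  set b : ℝ := rMinus M a with hb
  set c : ℝ := rPlus M a with hc
  have hbe : b = M - s0 := rfl
  have hce : c = M + s0 := rfl
  have hb0 : 0 < b := by rw [hbe]; linarith
  have hbM : b < M := by rw [hbe]; linarith
  have hMc : M < c := by rw [hce]; linarith
  have hbc : b < c := hbM.trans hMc
  have hbcm : b * c = a ^ 2 := by rw [hbe, hce]; linear_combination -hs0sq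
  have hbca : b + c = 2 * M := by rw [hbe, hce]; ring
  have hdelta : ∀ r : ℝ, KerrDelta M a r = (r - b) * (r - c) := by
    intro r; rw [hbe, hce, KerrDelta]; linear_combination hs0sq
  set f : ℝ → ℝ := fun s => (s ^ 2 + a ^ 2) / KerrDelta M a s with hf
  have hdneg : ∀ s ∈ Set.Ioo b c, KerrDelta M a s < 0 := by
    intro s hs
    rw [hdelta s]
    exact mul_neg_of_pos_of_neg (by linarith [hs.1]) (by linarith [hs.2])
  have hfneg : ∀ s ∈ Set.Ioo b c, f s < 0 := by
    intro s hs
    exact div_neg_of_pos_of_neg (by positivity) (hdneg s hs)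
  have hfcont : ContinuousOn f (Set.Ioo b c) := by
    apply ContinuousOn.div
    · fun_prop
    · have : Continuous fun s : ℝ => KerrDelta M a s := by unfold KerrDelta; fun_prop
      exact this.continuousOn
    · exact fun s hs => ne_of_lt (hdneg s hs)
  have hfint : ∀ u ∈ Set.Ioo b c, ∀ v ∈ Set.Ioo b c,
      IntervalIntegrable f volume u v := by
    intro u hu v hv
    exact (hfcont.mono (Set.ordConnected_Ioo.uIcc_subset hu hv)).intervalIntegrable
  have hMmem : M ∈ Set.Ioo b c := ⟨hbM, hMc⟩
  have hrStar_add : ∀ u ∈ Set.Ioo b c, ∀ v ∈ Set.Ioo b c,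
      rStar M a v = rStar M a u + ∫ s in u..v, f s := by
    intro u hu v hv
    have := intervalIntegral.integral_add_adjacent_intervals
      (hfint M hMmem u hu) (hfint u hu v hv)
    rw [rStar, rStar]
    exact this.symm
  have hrStar_anti : ∀ u ∈ Set.Ioo b c, ∀ v ∈ Set.Ioo b c, u < v →
      rStar M a v < rStar M a u := by
    intro u hu v hv huv
    rw [hrStar_add u hu v hv]
    have hneg : IntervalIntegrable (fun s => -f s) volume u v := (hfint u hu v hv).neg
    have hpos : 0 < ∫ s in u..v, -f s := by
      apply intervalIntegral.intervalIntegral_pos_of_pos_on hneg _ huv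
      intro s hs
      have hsm : s ∈ Set.Ioo b c := ⟨hu.1.trans hs.1, hs.2.trans hv.2⟩
      linarith [hfneg s hsm]
    rw [intervalIntegral.integral_neg] at hpos
    linarith
  have hkap : kappaMinus M a = (b - c) / (4 * M * b) := by rw [kappaMinus, ← hb, ← hc]
  have hMb : 0 < 4 * M * b := by positivity
  have hkneg : kappaMinus M a < 0 := by
    rw [hkap]; exact div_neg_of_neg_of_pos (by linarith) hMb
  refine ⟨hkneg, ?_⟩
  intro ε hε hε1
  have hε1' : 0 < 1 - ε := by linarith
  set K : ℝ := (c - b) / (4 * M * b) with hKdef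
  have hKpos : 0 < K := div_pos (by linarith) hMb
  have hkapK : kappaMinus M a = -K := by rw [hkap, hKdef]; ring
  set P : ℝ := 2 * M * b / (c - b) with hPdef
  have hPpos : 0 < P := div_pos (by positivity) (by linarith)
  set T : ℝ := P / (1 - ε) with hTdef
  have hTpos : 0 < T := div_pos hPpos hε1'
  have hPT : P < T := by
    rw [hTdef, lt_div_iff₀ hε1']
    linarith [mul_pos hPpos hε]
  set G : ℝ → ℝ := fun s => (s ^ 2 + a ^ 2) / (c - s) with hG
  have hGb : G b = P := by
    have hnum : b ^ 2 + a ^ 2 = 2 * M * b := by linear_combination (-1 : ℝ) * hbcm + b * hbca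
    show (b ^ 2 + a ^ 2) / (c - b) = P
    rw [hnum, hPdef]
  have hGcont : ContinuousAt G b := by
    apply ContinuousAt.div (by fun_prop) (by fun_prop)
    intro h; rw [sub_eq_zero] at h; exact absurd h.symm (ne_of_lt hbc)
  have hGt : Filter.Tendsto G (nhds b) (nhds (G b)) := hGcont
  have hev : ∀ᶠ s in nhds b, G s < T :=
    Filter.Tendsto.eventually_lt_const (by rw [hGb]; exact hPT) hGt
  obtain ⟨δ₁, hδ₁pos, hδ₁⟩ := Metric.eventually_nhds_iff.1 hev
  set δ : ℝ := min (δ₁ / 2) ((M - b) / 2) with hδdef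
  have hδpos : 0 < δ := lt_min (by linarith) (by linarith)
  have hδM : b + δ < M := by
    have : δ ≤ (M - b) / 2 := min_le_right _ _
    linarith
  have hGδ : ∀ s ∈ Set.Icc b (b + δ), G s < T := by
    intro s hs
    apply hδ₁
    rw [Real.dist_eq, abs_of_nonneg (by linarith [hs.1])]
    have : δ ≤ δ₁ / 2 := min_le_left _ _
    linarith [hs.2]
  set r1 : ℝ := b + δ with hr1def
  have hr1mem : r1 ∈ Set.Ioo b c := ⟨by linarith, by linarith⟩
  set x₀ : ℝ := 2 * rStar M a r1 with hx₀def
  have hrStarM : rStar M a M = 0 := intervalIntegral.integral_same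
  have hx₀pos : 0 < x₀ := by
    have := hrStar_anti r1 hr1mem M hMmem (by linarith)
    rw [hrStarM] at this
    simp only [hx₀def]; linarith
  -- the key integral estimate
  have key : ∀ r : ℝ, b < r → r ≤ r1 →
      2 * rStar M a r ≤ x₀ + 2 * T * (Real.log δ - Real.log (r - b)) := by
    intro r hbr hrr1
    have hrmem : r ∈ Set.Ioo b c := ⟨hbr, by linarith⟩
    have hintf : IntervalIntegrable f volume r r1 := hfint r hrmem r1 hr1mem
    have hint1 : IntervalIntegrable (fun s => -2 * f s) volume r r1 := by
      simpa using hintf.const_mul (-2)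
    have hint2 : IntervalIntegrable (fun s => 2 * T * (s - b)⁻¹) volume r r1 := by
      apply ContinuousOn.intervalIntegrable
      apply ContinuousOn.mul continuousOn_const
      apply ContinuousOn.inv₀ (by fun_prop)
      intro s hs
      rw [Set.uIcc_of_le hrr1] at hs
      have : r ≤ s := hs.1
      intro h; rw [sub_eq_zero] at h; subst h; linarith
    have hpoint : ∀ s ∈ Set.Icc r r1, -2 * f s ≤ 2 * T * (s - b)⁻¹ := by
      intro s hs
      have hsb : b < s := lt_of_lt_of_le hbr hs.1
      have hsc : s < c := by
        have : s ≤ r1 := hs.2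
        linarith [hr1mem.2]
      have hGs : G s < T := hGδ s ⟨le_of_lt hsb, hs.2⟩
      have heq : -2 * f s = 2 * G s * (s - b)⁻¹ := by
        simp only [hf, hG, hdelta s]
        have h1 : s - b ≠ 0 := by intro h; rw [sub_eq_zero] at h; subst h; linarith
        have h2 : s - c ≠ 0 := by intro h; rw [sub_eq_zero] at h; subst h; linarith
        have h3 : c - s ≠ 0 := by intro h; rw [sub_eq_zero] at h; linarith
        field_simp
        ring
      rw [heq]
      have hinv : 0 ≤ (s - b)⁻¹ := inv_nonneg.mpr (by linarith)
      apply mul_le_mul_of_nonneg_right _ hinv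
      linarith
    have hmono := intervalIntegral.integral_mono_on hrr1 hint1 hint2 hpoint
    -- compute LHS integral
    have hL : ∫ s in r..r1, -2 * f s = 2 * rStar M a r - x₀ := by
      rw [intervalIntegral.integral_const_mul]
      have h1 : rStar M a r = rStar M a r1 + ∫ s in r1..r, f s :=
        hrStar_add r1 hr1mem r hrmem
      rw [intervalIntegral.integral_symm r r1] at h1
      simp only [hx₀def]
      linarith
    -- compute RHS integral
    have hR : ∫ s in r..r1, 2 * T * (s - b)⁻¹
        = 2 * T * (Real.log δ - Real.log (r - b)) := by
      rw [intervalIntegral.integral_const_mul]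
      congr 1
      have hcomp : ∫ s in r..r1, (s - b)⁻¹ = ∫ x in (r - b)..(r1 - b), x⁻¹ :=
        intervalIntegral.integral_comp_sub_right (fun x => x⁻¹) b
      have hzero : (0 : ℝ) ∉ Set.uIcc (r - b) (r1 - b) := by
        rw [Set.uIcc_of_le (by linarith)]
        intro h
        exact absurd h.1 (by simp; linarith)
      have hdiv : ∫ x in (r - b)..(r1 - b), x⁻¹ = Real.log ((r1 - b) / (r - b)) := by
        rw [← integral_one_div hzero]
        simp [one_div]
      rw [hcomp, hdiv, Real.log_div (by linarith) (by intro h; rw [sub_eq_zero] at h; subst h; linarith)]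
      have : r1 - b = δ := by rw [hr1def]; ring
      rw [this]
    rw [hL, hR] at hmono
    linarith
  -- relation 2 T (1-ε) K = 1
  have hTK : 2 * T * ((1 - ε) * K) = 1 := by
    have hcb : c - b ≠ 0 := ne_of_gt (by linarith)
    have hε0 : (1 : ℝ) - ε ≠ 0 := ne_of_gt hε1'
    have hMb' : 4 * M * b ≠ 0 := ne_of_gt hMb
    rw [hTdef, hPdef, hKdef]
    field_simp
    ring
  set κ' : ℝ := (1 - ε) * kappaMinus M a with hκ'def
  have hκ'K : κ' = -((1 - ε) * K) := by rw [hκ'def, hkapK]; ring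
  have hκ'neg : κ' < 0 := by rw [hκ'K]; exact neg_lt_zero.mpr (mul_pos hε1' hKpos)
  set A : ℝ := (c - b) * (δ + (c - b)) / a ^ 2 with hAdef
  have hApos : 0 < A := by
    apply div_pos _ ha2pos
    apply mul_pos (by linarith) (by linarith)
  refine ⟨A * Real.exp (-(κ' * x₀)), by positivity, ?_⟩
  intro x hx
  have hrmem : ρ x ∈ Set.Ioo b c := hρmem x
  set r : ℝ := ρ x with hrdef
  have hxr : 2 * rStar M a r = x := hρinv x
  have hmu : -kerrMu M a r = (r - b) * (c - r) / (r ^ 2 + a ^ 2) := by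
    rw [kerrMu, hdelta r]
    ring
  have hden : a ^ 2 ≤ r ^ 2 + a ^ 2 := le_add_of_nonneg_left (sq_nonneg r)
  have hCexp : A * Real.exp (-(κ' * x₀)) * Real.exp (κ' * x)
      = A * Real.exp (κ' * (x - x₀)) := by
    rw [mul_assoc, ← Real.exp_add]
    congr 2
    ring
  have hgoal : (1 - ε) * kappaMinus M a * x = κ' * x := by rw [hκ'def]
  rw [hgoal, hCexp]
  by_cases hcase : x₀ ≤ x
  · -- region close to the Cauchy horizon
    have hrr1 : r ≤ r1 := by
      by_contra h
      push_neg at h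
      have := hrStar_anti r1 hr1mem r hrmem h
      have hx0' : x < x₀ := by
        rw [hx₀def]; linarith [hxr]
      linarith
    have hkey := key r hrmem.1 hrr1
    rw [hxr] at hkey
    -- derive log bound
    have hlog : Real.log (r - b) ≤ Real.log δ + κ' * (x - x₀) := by
      have h1 : (1 - ε) * K * (x - x₀) ≤ (1 - ε) * K * (2 * T * (Real.log δ - Real.log (r - b))) := by
        apply mul_le_mul_of_nonneg_left (by linarith) (by positivity)
      have h2 : (1 - ε) * K * (2 * T * (Real.log δ - Real.log (r - b)))
          = Real.log δ - Real.log (r - b) := by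
        linear_combination (Real.log δ - Real.log (r - b)) * hTK
      have h3 := h1.trans_eq h2
      have h4 : -((1 - ε) * K) * (x - x₀) = -((1 - ε) * K * (x - x₀)) := by ring
      rw [hκ'K, h4]
      linarith [h3]
    have hrb : r - b ≤ δ * Real.exp (κ' * (x - x₀)) := by
      have h3 : r - b = Real.exp (Real.log (r - b)) :=
        (Real.exp_log (by linarith [hrmem.1])).symm
      rw [h3]
      calc Real.exp (Real.log (r - b))
          ≤ Real.exp (Real.log δ + κ' * (x - x₀)) := Real.exp_le_exp.2 hlog
        _ = δ * Real.exp (κ' * (x - x₀)) := by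
            rw [Real.exp_add, Real.exp_log hδpos]
    have hmub : -kerrMu M a r ≤ (r - b) * (c - b) / a ^ 2 := by
      rw [hmu]
      apply div_le_div₀ (mul_nonneg (by linarith [hrmem.1]) (by linarith)) _ ha2pos hden
      apply mul_le_mul_of_nonneg_left (by linarith [hrmem.1]) (by linarith [hrmem.1])
    have hcoef : δ * (c - b) / a ^ 2 ≤ A := by
      rw [hAdef]
      exact (div_le_div_iff_of_pos_right ha2pos).mpr (by linarith [sq_nonneg (c - b)])
    calc -kerrMu M a r ≤ (r - b) * (c - b) / a ^ 2 := hmub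
      _ ≤ (δ * Real.exp (κ' * (x - x₀))) * (c - b) / a ^ 2 :=
          (div_le_div_iff_of_pos_right ha2pos).mpr
            (mul_le_mul_of_nonneg_right hrb (by linarith))
      _ = (δ * (c - b) / a ^ 2) * Real.exp (κ' * (x - x₀)) := by ring
      _ ≤ A * Real.exp (κ' * (x - x₀)) :=
          mul_le_mul_of_nonneg_right hcoef (Real.exp_nonneg _)
  · -- region x < x₀ : crude bound
    push_neg at hcase
    have hmub : -kerrMu M a r ≤ (c - b) * (c - b) / a ^ 2 := by
      rw [hmu]
      apply div_le_div₀ (mul_nonneg (by linarith) (by linarith)) _ ha2pos hden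
      apply mul_le_mul (by linarith [hrmem.2]) (by linarith [hrmem.1]) (by linarith [hrmem.2]) (by linarith)
    have hexp1 : 1 ≤ Real.exp (κ' * (x - x₀)) := by
      apply Real.one_le_exp
      have := mul_nonneg (neg_nonneg.mpr (le_of_lt hκ'neg)) (neg_nonneg.mpr (by linarith : x - x₀ ≤ 0))
      linarith [this, (by ring : -κ' * -(x - x₀) = κ' * (x - x₀))]
    have hA1 : (c - b) * (c - b) / a ^ 2 ≤ A := by
      rw [hAdef]
      exact (div_le_div_iff_of_pos_right ha2pos).mpr
        (by linarith [mul_pos (show (0:ℝ) < c - b by linarith) hδpos])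
    calc -kerrMu M a r ≤ (c - b) * (c - b) / a ^ 2 := hmub
      _ = ((c - b) * (c - b) / a ^ 2) * 1 := by ring
      _ ≤ A * Real.exp (κ' * (x - x₀)) :=
          mul_le_mul hA1 hexp1 zero_le_one (le_of_lt hApos)
end
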